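/- For every δ > 0 and every x ∈ X, the noisy and marginal rejection probabilities satisfy ρ̃_N(x) − ρ(x) ≤ δ + 2 sup_{x'∈X} P[|W_{x',N} − 1| ≥ δ/2]. -/

import Mathlib

/-!
Write `r = π(y)q(y,x)/(π(x)q(x,y))`, so that `α(x,y) = min 1 r` and
`α̃_N(x,y) = E[min 1 (r W_y / W_x)]`. If both weights lie within `δ/2` of `1`, then
`W_y / W_x ≥ 1 - δ`, hence `min 1 (r W_y / W_x) ≥ min 1 r - δ`; otherwise the integrand is still
`≥ 0 ≥ min 1 r - 1`. Thus `α - α̃ ≤ δ + P[|W_x - 1| ≥ δ/2] + P[|W_y - 1| ≥ δ/2]` pointwise, and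
integrating against the probability density `q(x,·)` gives the bound.
-/

open MeasureTheory ProbabilityTheory Filter
open scoped ENNReal

/-- Metropolis--Hastings acceptance probability
`α(x,y) = min {1, π(y)q(y,x) / (π(x)q(x,y))}`. -/
noncomputable def mhAlpha {X : Type*} (pi : X → ℝ) (q : X → X → ℝ) (x y : X) : ℝ :=
  min 1 (pi y * q y x / (pi x * q x y))

/-- Noisy (Monte Carlo within Metropolis) acceptance probability
`α̃_N(x,y) = E[min {1, π(y)q(y,x)W_{y,N} / (π(x)q(x,y)W_{x,N})}]`,
the expectation being over independent weights `W_{x,N} ~ Q_N(x,·)` and `W_{y,N} ~ Q_N(y,·)`. -/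
noncomputable def noisyAlpha {X : Type*} [MeasurableSpace X] (pi : X → ℝ) (q : X → X → ℝ)
    (Q : ℕ → Kernel X ℝ) (N : ℕ) (x y : X) : ℝ :=
  ∫ w, ∫ u, min 1 (pi y * q y x * u / (pi x * q x y * w)) ∂((Q N) y) ∂((Q N) x)

/-- Marginal rejection probability `ρ(x) = 1 - ∫ α(x,y) q(x,y) μ(dy)`. -/
noncomputable def mhRho {X : Type*} [MeasurableSpace X] (μ : Measure X)
    (pi : X → ℝ) (q : X → X → ℝ) (x : X) : ℝ :=
  1 - ∫ y, mhAlpha pi q x y * q x y ∂μ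

/-- Noisy rejection probability `ρ̃_N(x) = 1 - ∫ α̃_N(x,y) q(x,y) μ(dy)`. -/
noncomputable def noisyRho {X : Type*} [MeasurableSpace X] (μ : Measure X)
    (pi : X → ℝ) (q : X → X → ℝ) (Q : ℕ → Kernel X ℝ) (N : ℕ) (x : X) : ℝ :=
  1 - ∫ y, noisyAlpha pi q Q N x y * q x y ∂μ

lemma one_sub_le_div_of_abs_sub_one_lt {δ w u : ℝ} (hw : 0 < w) (hu : 0 < u)
    (hw1 : |w - 1| < δ / 2) (hu1 : |u - 1| < δ / 2) : 1 - δ ≤ u / w := by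
  rw [le_div_iff₀ hw]
  obtain ⟨hw₁, hw₂⟩ := abs_lt.mp hw1
  obtain ⟨hu₁, hu₂⟩ := abs_lt.mp hu1
  rcases le_total δ 1 with hδ | hδ
  -- `(1 - δ) w < (1 - δ) (1 + δ / 2) ≤ 1 - δ / 2 < u`
  · nlinarith [mul_nonneg (sub_nonneg.mpr hδ) (by linarith : (0 : ℝ) ≤ 1 + δ / 2 - w)]
  · nlinarith

lemma min_one_sub_le_min_one_mul {r δ t : ℝ} (hr : 0 ≤ r) (hδ : 0 ≤ δ) (ht : 0 ≤ t)
    (hδt : 1 - δ ≤ t) : min 1 r - δ ≤ min 1 (r * t) := by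
  refine le_min (by linarith [min_le_left 1 r]) ?_
  rcases le_total r 1 with h | h
  · rw [min_eq_right h]
    nlinarith
  · rw [min_eq_left h]
    nlinarith

lemma min_one_sub_indicator_sub_indicator_le {r δ w u : ℝ} (hr : 0 ≤ r) (hδ : 0 ≤ δ)
    (hw : 0 < w) (hu : 0 < u) :
    min 1 r - δ - {v : ℝ | δ / 2 ≤ |v - 1|}.indicator 1 w
      - {v : ℝ | δ / 2 ≤ |v - 1|}.indicator 1 u ≤ min 1 (r * (u / w)) := by
  have hmin : 0 ≤ min 1 (r * (u / w)) := le_min zero_le_one (by positivity)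
  have hle : min 1 r ≤ 1 := min_le_left _ _
  simp only [Set.indicator_apply, Set.mem_ofPred_eq, Pi.one_apply]
  split_ifs with hw1 hu1 hu1
  · linarith
  · linarith
  · linarith
  · simpa using min_one_sub_le_min_one_mul hr hδ (by positivity)
      (one_sub_le_div_of_abs_sub_one_lt hw hu (not_le.mp hw1) (not_le.mp hu1))

section Integral

variable {α β : Type*} [MeasurableSpace α] [MeasurableSpace β]
  {μ : Measure α} [IsProbabilityMeasure μ] {ν : Measure β} [IsProbabilityMeasure ν]

-- `0 ≤ C` covers the case where `f` is not integrable and the integral is `0`.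
lemma integral_le_of_forall_le_of_nonneg {f : α → ℝ} {C : ℝ} (hC : 0 ≤ C) (hf : ∀ a, f a ≤ C) :
    ∫ a, f a ∂μ ≤ C := by
  by_cases hi : Integrable f μ
  · simpa using integral_mono hi (integrable_const C) hf
  · simpa [integral_undef hi] using hC

lemma sub_measureReal_le_integral {f : α → ℝ} {s : Set α} {c C : ℝ}
    (hf : AEStronglyMeasurable f μ) (hs : MeasurableSet s) (hfC : ∀ᵐ a ∂μ, f a ≤ C)
    (hcf : ∀ᵐ a ∂μ, c - s.indicator 1 a ≤ f a) : c - μ.real s ≤ ∫ a, f a ∂μ := by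
  have hind : Integrable (s.indicator (1 : α → ℝ)) μ := (integrable_const 1).indicator hs
  have hlow : Integrable (fun a => c - s.indicator 1 a) μ := (integrable_const c).sub hind
  calc c - μ.real s = ∫ a, (c - s.indicator 1 a) ∂μ := by
        rw [integral_sub (integrable_const c) hind, integral_indicator_one hs]
        simp
    _ ≤ ∫ a, f a ∂μ :=
        integral_mono_ae hlow (integrable_of_le_of_le hf hcf hfC hlow (integrable_const C)) hcf

lemma sub_measureReal_sub_measureReal_le_integral_integral {g : α → β → ℝ}
    (hg : Measurable (Function.uncurry g)) {C : ℝ} (hC : 0 ≤ C) (hgC : ∀ a b, g a b ≤ C)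
    {s : Set α} {t : Set β} (hs : MeasurableSet s) (ht : MeasurableSet t) {c : ℝ}
    (hcg : ∀ᵐ a ∂μ, ∀ᵐ b ∂ν, c - s.indicator 1 a - t.indicator 1 b ≤ g a b) :
    c - μ.real s - ν.real t ≤ ∫ a, ∫ b, g a b ∂ν ∂μ := by
  rw [sub_right_comm]
  refine sub_measureReal_le_integral
    hg.stronglyMeasurable.integral_prod_right'.aestronglyMeasurable hs
    (ae_of_all _ fun a => integral_le_of_forall_le_of_nonneg hC (hgC a)) ?_
  filter_upwards [hcg] with a ha
  rw [sub_right_comm]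
  exact sub_measureReal_le_integral (hg.comp measurable_prodMk_left).aestronglyMeasurable ht
    (ae_of_all _ (hgC a)) ha

end Integral

lemma stronglyMeasurable_integral_integral_kernel {X β γ : Type*} [MeasurableSpace X]
    [MeasurableSpace β] [MeasurableSpace γ] {κ : Kernel X β} [IsSFiniteKernel κ]
    {ν : Measure γ} [SFinite ν] {F : X → γ → β → ℝ}
    (hF : Measurable fun p : (X × γ) × β => F p.1.1 p.1.2 p.2) :
    StronglyMeasurable fun y => ∫ w, ∫ u, F y w u ∂κ y ∂ν := by
  have hinner : StronglyMeasurable fun p : X × γ => ∫ u, F p.1 p.2 u ∂κ p.1 := by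
    simpa only [Kernel.comap_apply] using hF.stronglyMeasurable.integral_kernel_prod_right'
      (κ := κ.comap Prod.fst measurable_fst)
  exact hinner.integral_prod_right'

lemma integral_mul_sub_integral_mul_le {X : Type*} [MeasurableSpace X] {μ : Measure X}
    {p f g : X → ℝ} {B : ℝ} (hp : Integrable p μ) (hp0 : ∀ y, 0 ≤ p y) (hp1 : ∫ y, p y ∂μ = 1)
    (hf : AEStronglyMeasurable f μ) (hg : AEStronglyMeasurable g μ)
    (hf01 : ∀ y, f y ∈ Set.Icc 0 1) (hg01 : ∀ y, g y ∈ Set.Icc 0 1)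
    (hfg : ∀ y, f y - g y ≤ B) : ∫ y, f y * p y ∂μ - ∫ y, g y * p y ∂μ ≤ B := by
  have integrable_mul : ∀ h : X → ℝ, AEStronglyMeasurable h μ → (∀ y, h y ∈ Set.Icc 0 1) →
      Integrable (fun y => h y * p y) μ := fun h hh h01 =>
    hp.bdd_mul hh (ae_of_all _ fun y => by
      rw [Real.norm_of_nonneg (h01 y).1]
      exact (h01 y).2)
  have hfi := integrable_mul f hf hf01
  have hgi := integrable_mul g hg hg01
  calc ∫ y, f y * p y ∂μ - ∫ y, g y * p y ∂μ = ∫ y, (f y - g y) * p y ∂μ := by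
        rw [← integral_sub hfi hgi]
        simp only [sub_mul]
    _ ≤ ∫ y, B * p y ∂μ :=
        integral_mono (by simp_rw [sub_mul]; exact hfi.sub hgi) (hp.const_mul B)
          fun y => mul_le_mul_of_nonneg_right (hfg y) (hp0 y)
    _ = B := by rw [integral_const_mul, hp1, mul_one]

section NoisyAcceptance

variable {ν₁ ν₂ : Measure ℝ}

lemma integral_integral_min_one_mul_div_nonneg {r : ℝ} (hr : 0 ≤ r) (h₁ : ∀ᵐ w ∂ν₁, 0 < w)
    (h₂ : ∀ᵐ u ∂ν₂, 0 < u) : 0 ≤ ∫ w, ∫ u, min 1 (r * (u / w)) ∂ν₂ ∂ν₁ := by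
  refine integral_nonneg_of_ae ?_
  filter_upwards [h₁] with w hw
  refine integral_nonneg_of_ae ?_
  filter_upwards [h₂] with u hu
  exact le_min zero_le_one (by positivity)

lemma integral_integral_min_one_le_one [IsProbabilityMeasure ν₁] [IsProbabilityMeasure ν₂]
    {f : ℝ → ℝ → ℝ} :
    ∫ w, ∫ u, min 1 (f w u) ∂ν₂ ∂ν₁ ≤ 1 :=
  integral_le_of_forall_le_of_nonneg zero_le_one fun _ =>
    integral_le_of_forall_le_of_nonneg zero_le_one fun _ => min_le_left _ _

lemma min_one_sub_integral_integral_min_one_mul_div_le [IsProbabilityMeasure ν₁]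
    [IsProbabilityMeasure ν₂] {r δ : ℝ} (hr : 0 ≤ r) (hδ : 0 ≤ δ)
    (h₁ : ∀ᵐ w ∂ν₁, 0 < w) (h₂ : ∀ᵐ u ∂ν₂, 0 < u) :
    min 1 r - ∫ w, ∫ u, min 1 (r * (u / w)) ∂ν₂ ∂ν₁
      ≤ δ + ν₁.real {v | δ / 2 ≤ |v - 1|} + ν₂.real {v | δ / 2 ≤ |v - 1|} := by
  have hA : MeasurableSet {v : ℝ | δ / 2 ≤ |v - 1|} :=
    measurableSet_le (by fun_prop) (by fun_prop)
  have := sub_measureReal_sub_measureReal_le_integral_integral (μ := ν₁) (ν := ν₂)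
    (g := fun w u => min 1 (r * (u / w))) (by fun_prop) zero_le_one (fun _ _ => min_le_left _ _)
    hA hA (c := min 1 r - δ) (by
      filter_upwards [h₁] with w hw
      filter_upwards [h₂] with u hu
      exact min_one_sub_indicator_sub_indicator_le hr hδ hw hu)
  linarith

end NoisyAcceptance

section MetropolisHastings

variable {X : Type*} {pi : X → ℝ} {q : X → X → ℝ}

lemma mhRatio_nonneg (hpi : ∀ x, 0 ≤ pi x) (hq : ∀ x y, 0 ≤ q x y) (x y : X) :
    0 ≤ pi y * q y x / (pi x * q x y) :=
  div_nonneg (mul_nonneg (hpi y) (hq y x)) (mul_nonneg (hpi x) (hq x y))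

lemma mhAlpha_mem_Icc (hpi : ∀ x, 0 ≤ pi x) (hq : ∀ x y, 0 ≤ q x y) (x y : X) :
    mhAlpha pi q x y ∈ Set.Icc 0 1 :=
  ⟨le_min zero_le_one (mhRatio_nonneg hpi hq x y), min_le_left _ _⟩

variable [MeasurableSpace X]

lemma measurable_mhAlpha (hpi : Measurable pi) (hq : Measurable (Function.uncurry q)) (x : X) :
    Measurable (mhAlpha pi q x) := by
  have hq' : Measurable fun p : X × X => q p.1 p.2 := hq
  unfold mhAlpha
  fun_prop

lemma stronglyMeasurable_noisyAlpha (hpi : Measurable pi) (hq : Measurable (Function.uncurry q))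
    (Q : ℕ → Kernel X ℝ) (N : ℕ) [IsSFiniteKernel (Q N)] (x : X) :
    StronglyMeasurable (noisyAlpha pi q Q N x) := by
  have hq' : Measurable fun p : X × X => q p.1 p.2 := hq
  exact stronglyMeasurable_integral_integral_kernel (by fun_prop)

lemma noisyAlpha_eq_integral_integral (Q : ℕ → Kernel X ℝ) (N : ℕ) (x y : X) :
    noisyAlpha pi q Q N x y
      = ∫ w, ∫ u, min 1 (pi y * q y x / (pi x * q x y) * (u / w)) ∂(Q N) y ∂(Q N) x := by
  simp only [noisyAlpha, mul_div_mul_comm (pi y * q y x)]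

variable {Q : ℕ → Kernel X ℝ} {N : ℕ} [IsMarkovKernel (Q N)]

lemma noisyAlpha_mem_Icc (hpi : ∀ x, 0 ≤ pi x) (hq : ∀ x y, 0 ≤ q x y)
    (hQ : ∀ x, ∀ᵐ w ∂(Q N) x, 0 < w) (x y : X) : noisyAlpha pi q Q N x y ∈ Set.Icc 0 1 := by
  rw [noisyAlpha_eq_integral_integral]
  exact ⟨integral_integral_min_one_mul_div_nonneg (mhRatio_nonneg hpi hq x y) (hQ x) (hQ y),
    integral_integral_min_one_le_one⟩

lemma mhAlpha_sub_noisyAlpha_le (hpi : ∀ x, 0 ≤ pi x) (hq : ∀ x y, 0 ≤ q x y)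
    (hQ : ∀ x, ∀ᵐ w ∂(Q N) x, 0 < w) {δ : ℝ} (hδ : 0 ≤ δ) (x y : X) :
    mhAlpha pi q x y - noisyAlpha pi q Q N x y
      ≤ δ + ((Q N) x).real {v | δ / 2 ≤ |v - 1|} + ((Q N) y).real {v | δ / 2 ≤ |v - 1|} := by
  rw [mhAlpha, noisyAlpha_eq_integral_integral]
  exact min_one_sub_integral_integral_min_one_mul_div_le (mhRatio_nonneg hpi hq x y) hδ
    (hQ x) (hQ y)

end MetropolisHastings

theorem noisy_rejection_bound_general
    {X : Type*} [MeasurableSpace X] (μ : Measure X)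
    (pi : X → ℝ) (q : X → X → ℝ)
    (hpi_pos : ∀ x, 0 < pi x) (hpi_meas : Measurable pi)
    (hq_meas : Measurable (Function.uncurry q)) (hq_nonneg : ∀ x y, 0 ≤ q x y)
    (hq_int : ∀ x, Integrable (fun y => q x y) μ)
    (hq_one : ∀ x, ∫ y, q x y ∂μ = 1)
    (Q : ℕ → Kernel X ℝ) [∀ N, IsMarkovKernel (Q N)]
    (hQ_pos : ∀ N x, (Q N) x {w : ℝ | w ≤ 0} = 0)
    (N : ℕ) (x : X) (δ : ℝ) (hδ : 0 < δ) :
    noisyRho μ pi q Q N x - mhRho μ pi q x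
      ≤ δ + 2 * ⨆ x', (((Q N) x') {w : ℝ | δ / 2 ≤ |w - 1|}).toReal := by
  set S := ⨆ x', (((Q N) x') {w : ℝ | δ / 2 ≤ |w - 1|}).toReal
  have hpi : ∀ x, 0 ≤ pi x := fun x => (hpi_pos x).le
  have hpos : ∀ x', ∀ᵐ w ∂(Q N) x', 0 < w := fun x' => by
    simpa only [ae_iff, not_lt] using hQ_pos N x'
  have hS : ∀ x', ((Q N) x').real {w : ℝ | δ / 2 ≤ |w - 1|} ≤ S := le_ciSup ⟨1, by
    rintro _ ⟨x', rfl⟩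
    exact measureReal_le_one⟩
  have hgap : ∀ y, mhAlpha pi q x y - noisyAlpha pi q Q N x y ≤ δ + 2 * S := fun y => by
    linarith [mhAlpha_sub_noisyAlpha_le hpi hq_nonneg hpos hδ.le x y, hS x, hS y]
  simpa only [noisyRho, mhRho, sub_sub_sub_cancel_left] using
    integral_mul_sub_integral_mul_le (hq_int x) (hq_nonneg x) (hq_one x)
      (measurable_mhAlpha hpi_meas hq_meas x).aestronglyMeasurable
      (stronglyMeasurable_noisyAlpha hpi_meas hq_meas Q N x).aestronglyMeasurable
      (mhAlpha_mem_Icc hpi hq_nonneg x) (noisyAlpha_mem_Icc hpi hq_nonneg hpos x) hgap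

/-- For every `δ > 0` and every `x`, the noisy and marginal rejection
probabilities satisfy `ρ̃_N(x) - ρ(x) ≤ δ + 2 sup_{x'} P[|W_{x',N} - 1| ≥ δ/2]`. -/
theorem noisy_rejection_bound
    {X : Type*} [MeasurableSpace X] (μ : Measure X)
    (pi : X → ℝ) (q : X → X → ℝ)
    (hpi_pos : ∀ x, 0 < pi x) (hpi_meas : Measurable pi)
    (hq_meas : Measurable (Function.uncurry q)) (hq_nonneg : ∀ x y, 0 ≤ q x y)
    (hq_int : ∀ x, Integrable (fun y => q x y) μ)
    (hq_one : ∀ x, ∫ y, q x y ∂μ = 1)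
    (Q : ℕ → Kernel X ℝ) [∀ N, IsMarkovKernel (Q N)]
    (hQ_pos : ∀ N x, (Q N) x {w : ℝ | w ≤ 0} = 0)
    (hQ_mean : ∀ N x, ∫ w, w ∂((Q N) x) = 1)
    (N : ℕ) (x : X) (δ : ℝ) (hδ : 0 < δ) :
    noisyRho μ pi q Q N x - mhRho μ pi q x
      ≤ δ + 2 * ⨆ x', (((Q N) x') {w : ℝ | δ / 2 ≤ |w - 1|}).toReal :=
  noisy_rejection_bound_general μ pi q hpi_pos hpi_meas hq_meas hq_nonneg hq_int hq_one Q hQ_pos N x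
    δ hδ
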